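/- The function K^L(x) = ∏_{ℓ=1}^L sinc(2^{-ℓ}x) has Fourier transform supported in [-(1-2^{-L}), 1-2^{-L}], and F K^L(ξ) = √(2π) for all |ξ| ≤ 2^{-L}. In particular, F K^L equals √(2π) times the (L-1)-fold convolution χ_{[-1/2,1/2]} ∗ 2χ_{[-1/4,1/4]} ∗ … ∗ 2^{L-1}χ_{[-2^{-L},2^{-L}]}. -/

import Mathlib

/-!
In Mathlib's normalization the box `dilBox l` has Fourier transform `w ↦ sinc (2πw / 2^l)`, so by
the convolution theorem `𝓕 (convChain n) = KL (n + 1) (2π ·)`. For `L ≥ 2` two factors of `KL L`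
already give `|KL L x| = O(x⁻²)`, so `KL L` is integrable, and `convChain (L - 1)` is continuous,
being an integrable function averaged over a window. Fourier inversion, after the substitution
`x = 2πy` relating `myFT` to `𝓕`, then gives `myFT (KL L) = √(2π) · convChain (L - 1)`.
Convolving with `dilBox (n + 2)` averages over a window of half-width `2^{-(n+2)}`: this widens
the support `[-(1 - 2^{-(n+1)}), 1 - 2^{-(n+1)}]` and shrinks the plateau `[-2^{-(n+1)}, 2^{-(n+1)}]`,
where the chain equals `1`, by exactly that amount.
-/

open Real Finset MeasureTheory

/-- The normalized `sinc` function: `sin x / x` for `x ≠ 0`, and `1` at `0`. -/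
noncomputable def sinc (x : ℝ) : ℝ := if x = 0 then 1 else Real.sin x / x

/-- The kernel `K^L(x) = ∏_{ℓ=1}^L sinc(2^{-ℓ} x)`. -/
noncomputable def KL (L : ℕ) (x : ℝ) : ℝ := ∏ l ∈ Finset.Icc 1 L, _root_.sinc (x / 2 ^ l)

/-- The Fourier transform `F f(ξ) = (2π)^{-1/2} ∫ f(x) e^{-iξx} dx` of a real-valued
function on `ℝ`. -/
noncomputable def myFT (f : ℝ → ℝ) (ξ : ℝ) : ℂ :=
  (Real.sqrt (2 * Real.pi) : ℂ)⁻¹ *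
    ∫ x : ℝ, (f x : ℂ) * Complex.exp (-Complex.I * ξ * x)

/-- The dilated box function `2^{ℓ-1} χ_{[-2^{-ℓ}, 2^{-ℓ}]}`. -/
noncomputable def dilBox (l : ℕ) (t : ℝ) : ℝ :=
  2 ^ (l - 1) * Set.indicator (Set.Icc (-(2 : ℝ) ^ (-(l : ℤ))) ((2 : ℝ) ^ (-(l : ℤ)))) 1 t

/-- The iterated convolution chain: `convChain n` is the `(n+1)`-fold convolution
`χ_{[-1/2,1/2]} ∗ 2χ_{[-1/4,1/4]} ∗ … ∗ 2^n χ_{[-2^{-(n+1)}, 2^{-(n+1)}]}`. -/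
noncomputable def convChain : ℕ → ℝ → ℝ
  | 0, x => dilBox 1 x
  | (n + 1), x => ∫ y : ℝ, convChain n y * dilBox (n + 2) (x - y)

open Convolution FourierTransform

noncomputable def boxRadius (l : ℕ) : ℝ := (2 : ℝ) ^ (-(l : ℤ))

lemma boxRadius_pos (l : ℕ) : 0 < boxRadius l := by unfold boxRadius; positivity

lemma boxRadius_zero : boxRadius 0 = 1 := by simp [boxRadius]

lemma two_mul_boxRadius_succ (l : ℕ) : 2 * boxRadius (l + 1) = boxRadius l := by
  simp only [boxRadius, Nat.cast_succ, neg_add, zpow_add₀ (two_ne_zero' ℝ)]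
  ring

lemma two_pow_pred_mul_two_mul_boxRadius {l : ℕ} (hl : 1 ≤ l) :
    (2 : ℝ) ^ (l - 1) * (2 * boxRadius l) = 1 := by
  obtain ⟨k, rfl⟩ := Nat.exists_eq_add_of_le' hl
  rw [two_mul_boxRadius_succ, Nat.add_sub_cancel, boxRadius, zpow_neg, zpow_natCast,
    mul_inv_cancel₀ (by positivity)]

lemma dilBox_eq_indicator (l : ℕ) :
    dilBox l = (Set.Icc (-boxRadius l) (boxRadius l)).indicator fun _ ↦ (2 : ℝ) ^ (l - 1) := by
  ext t
  simp [dilBox, boxRadius, ← Set.indicator_const_mul]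

lemma dilBox_eq_zero {l : ℕ} {t : ℝ} (ht : boxRadius l < |t|) : dilBox l t = 0 := by
  rw [dilBox_eq_indicator]
  apply Set.indicator_of_notMem
  exact fun h ↦ ht.not_ge (abs_le.2 h)

lemma integrable_dilBox (l : ℕ) : Integrable (dilBox l) := by
  rw [dilBox_eq_indicator]
  exact (integrableOn_const (by simp)).integrable_indicator measurableSet_Icc

lemma integral_mul_dilBox_sub (f : ℝ → ℝ) (l : ℕ) (x : ℝ) :
    ∫ y, f y * dilBox l (x - y) =
      2 ^ (l - 1) * ∫ y in (x - boxRadius l)..(x + boxRadius l), f y := by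
  set r := boxRadius l
  have hpoint : ∀ y, f y * dilBox l (x - y) =
      2 ^ (l - 1) * (Set.Icc (x - r) (x + r)).indicator f y := by
    intro y
    have hmem : x - y ∈ Set.Icc (-r) r ↔ y ∈ Set.Icc (x - r) (x + r) := by
      simp only [Set.mem_Icc]
      constructor <;> rintro ⟨h₁, h₂⟩ <;> constructor <;> linarith
    simp only [dilBox_eq_indicator, Set.indicator_apply, hmem, r]
    split_ifs <;> ring
  simp_rw [hpoint]
  rw [integral_const_mul, integral_indicator measurableSet_Icc, integral_Icc_eq_integral_Ioc,
    intervalIntegral.integral_of_le (by linarith [boxRadius_pos l])]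

lemma convChain_succ_eq_intervalIntegral (n : ℕ) (x : ℝ) :
    convChain (n + 1) x =
      2 ^ (n + 1) * ∫ y in (x - boxRadius (n + 2))..(x + boxRadius (n + 2)), convChain n y :=
  integral_mul_dilBox_sub _ _ _

lemma intervalIntegral_sub_add_eq_zero {f : ℝ → ℝ} {c r x : ℝ} (hr : 0 ≤ r)
    (hf : ∀ y, c < |y| → f y = 0) (hx : c + r ≤ |x|) :
    ∫ y in (x - r)..(x + r), f y = 0 := by
  rw [intervalIntegral.integral_of_le (by linarith), integral_Ioc_eq_integral_Ioo]
  refine setIntegral_eq_zero_of_forall_eq_zero fun y hy ↦ hf y ?_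
  have hxy : |x - y| < r := abs_sub_lt_iff.2 ⟨by linarith [hy.1], by linarith [hy.2]⟩
  linarith [abs_sub_abs_le_abs_sub x y]

lemma continuous_intervalIntegral_sub_add {f : ℝ → ℝ} (hf : Integrable f) (r : ℝ) :
    Continuous fun x ↦ ∫ y in (x - r)..(x + r), f y := by
  have hprim := hf.continuous_primitive 0
  have heq : (fun x ↦ ∫ y in (x - r)..(x + r), f y) =
      fun x ↦ (∫ y in 0..(x + r), f y) - ∫ y in 0..(x - r), f y := by
    ext x
    rw [intervalIntegral.integral_interval_sub_left hf.intervalIntegrable hf.intervalIntegrable]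
  rw [heq]
  exact (hprim.comp (continuous_add_const r)).sub (hprim.comp (continuous_sub_right r))

lemma convChain_eq_zero_of_lt_abs (n : ℕ) {x : ℝ} (hx : 1 - boxRadius (n + 1) < |x|) :
    convChain n x = 0 := by
  induction n generalizing x with
  | zero =>
    refine dilBox_eq_zero ?_
    linarith [two_mul_boxRadius_succ 0, boxRadius_zero]
  | succ n ih =>
    rw [convChain_succ_eq_intervalIntegral, intervalIntegral_sub_add_eq_zero (boxRadius_pos _).le
      (fun y ↦ ih), mul_zero]
    linarith [two_mul_boxRadius_succ (n + 1)]

lemma convChain_succ_eq_zero_of_le_abs (n : ℕ) {x : ℝ} (hx : 1 - boxRadius (n + 2) ≤ |x|) :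
    convChain (n + 1) x = 0 := by
  rw [convChain_succ_eq_intervalIntegral, intervalIntegral_sub_add_eq_zero (boxRadius_pos _).le
    (fun y ↦ convChain_eq_zero_of_lt_abs n), mul_zero]
  linarith [two_mul_boxRadius_succ (n + 1)]

lemma convChain_eq_one_of_abs_le (n : ℕ) {x : ℝ} (hx : |x| ≤ boxRadius (n + 1)) :
    convChain n x = 1 := by
  induction n generalizing x with
  | zero =>
    rw [convChain, dilBox_eq_indicator, Set.indicator_of_mem (s := Set.Icc _ _) (abs_le.1 hx),
      pow_zero]
  | succ n ih =>
    set r := boxRadius (n + 2)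
    have hr : 2 * r = boxRadius (n + 1) := two_mul_boxRadius_succ (n + 1)
    have hxr : x - r ≤ x + r := by linarith [boxRadius_pos (n + 2)]
    have hone : Set.EqOn (convChain n) 1 (Set.uIcc (x - r) (x + r)) := by
      intro y hy
      rw [Set.uIcc_of_le hxr] at hy
      apply ih
      rw [abs_le] at hx ⊢
      constructor <;> linarith [hy.1, hy.2]
    rw [convChain_succ_eq_intervalIntegral, intervalIntegral.integral_congr hone]
    simp only [Pi.one_apply, intervalIntegral.integral_const, smul_eq_mul, mul_one]
    rw [show x + r - (x - r) = 2 * r by ring]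
    exact two_pow_pred_mul_two_mul_boxRadius (l := n + 2) (by omega)

lemma convChain_succ_eq_convolution (n : ℕ) :
    convChain (n + 1) = convChain n ⋆[ContinuousLinearMap.mul ℝ ℝ] dilBox (n + 2) := rfl

lemma integrable_convChain (n : ℕ) : Integrable (convChain n) := by
  induction n with
  | zero => exact integrable_dilBox 1
  | succ n ih =>
    rw [convChain_succ_eq_convolution]
    exact ih.integrable_convolution _ (integrable_dilBox _)

lemma continuous_convChain_succ (n : ℕ) : Continuous (convChain (n + 1)) := by
  simp_rw [funext (convChain_succ_eq_intervalIntegral n)]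
  exact continuous_const.mul (continuous_intervalIntegral_sub_add (integrable_convChain n) _)

lemma integral_exp_mul_I_eq_two_mul_sinc (r c : ℝ) :
    ∫ t in -r..r, Complex.exp (c * t * Complex.I) = 2 * r * Real.sinc (r * c) := by
  rcases eq_or_ne (r * c) 0 with hrc | hrc
  · rcases mul_eq_zero.1 hrc with rfl | rfl <;> simp [two_mul]
  have hr : (r : ℂ) ≠ 0 := by exact_mod_cast left_ne_zero_of_mul hrc
  have hc : (c : ℂ) ≠ 0 := by exact_mod_cast right_ne_zero_of_mul hrc
  have hexp (t : ℝ) : Complex.exp (c * t * Complex.I) = Complex.exp (c * Complex.I * t) := by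
    ring_nf
  simp_rw [hexp]
  rw [integral_exp_mul_complex (mul_ne_zero hc Complex.I_ne_zero), Real.sinc_of_ne_zero hrc]
  have hsin : Complex.exp (c * Complex.I * r) - Complex.exp (c * Complex.I * ↑(-r)) =
      2 * Complex.sin (r * c) * Complex.I := by
    rw [show (c : ℂ) * Complex.I * r = (r * c : ℂ) * Complex.I by ring,
      show (c : ℂ) * Complex.I * ↑(-r) = -(r * c : ℂ) * Complex.I by push_cast; ring,
      Complex.exp_mul_I, Complex.exp_mul_I, Complex.cos_neg, Complex.sin_neg]
    ring
  rw [hsin]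
  push_cast
  field_simp

lemma fourier_ofReal_dilBox {l : ℕ} (hl : 1 ≤ l) (w : ℝ) :
    𝓕 (fun t ↦ (dilBox l t : ℂ)) w = Real.sinc (2 * π * w / 2 ^ l) := by
  have hind : (fun t ↦ Complex.exp (↑(-2 * π * t * w) * Complex.I) • (dilBox l t : ℂ)) =
      (Set.Icc (-boxRadius l) (boxRadius l)).indicator
        fun t ↦ (2 : ℂ) ^ (l - 1) * Complex.exp (↑(-2 * π * w) * t * Complex.I) := by
    ext t
    by_cases ht : t ∈ Set.Icc (-boxRadius l) (boxRadius l)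
    · simp only [dilBox_eq_indicator, Set.indicator_of_mem ht, smul_eq_mul]
      push_cast
      ring_nf
    · simp [dilBox_eq_indicator, Set.indicator_of_notMem ht]
  have hsinc : Real.sinc (boxRadius l * (-2 * π * w)) = Real.sinc (2 * π * w / 2 ^ l) := by
    rw [← Real.sinc_neg, boxRadius, zpow_neg, zpow_natCast]
    ring_nf
  have hnorm : (2 : ℂ) ^ (l - 1) * (2 * boxRadius l) = 1 := by
    exact_mod_cast two_pow_pred_mul_two_mul_boxRadius hl
  rw [Real.fourier_real_eq_integral_exp_smul, hind, integral_indicator measurableSet_Icc,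
    integral_Icc_eq_integral_Ioc, ← intervalIntegral.integral_of_le (by linarith [boxRadius_pos l]),
    intervalIntegral.integral_const_mul, integral_exp_mul_I_eq_two_mul_sinc, hsinc]
  linear_combination (Real.sinc (2 * π * w / 2 ^ l) : ℂ) * hnorm

lemma ofReal_convolution_mul {G : Type*} [MeasurableSpace G] [Sub G] {μ : Measure G}
    (f g : G → ℝ) :
    (fun x ↦ ((f ⋆[ContinuousLinearMap.mul ℝ ℝ, μ] g) x : ℂ)) =
      (fun x ↦ (f x : ℂ)) ⋆[ContinuousLinearMap.mul ℂ ℂ, μ] fun x ↦ (g x : ℂ) := by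
  ext x
  simp only [convolution_def, ContinuousLinearMap.mul_apply']
  exact_mod_cast (integral_ofReal (𝕜 := ℂ)).symm

lemma sinc_eq_real_sinc : _root_.sinc = Real.sinc := rfl

lemma KL_succ (L : ℕ) (x : ℝ) : KL (L + 1) x = KL L x * Real.sinc (x / 2 ^ (L + 1)) :=
  Finset.prod_Icc_succ_top (by omega) _

lemma KL_neg (L : ℕ) (x : ℝ) : KL L (-x) = KL L x := by
  simp [KL, sinc_eq_real_sinc, neg_div]

lemma continuous_KL (L : ℕ) : Continuous (KL L) := by
  change Continuous fun x ↦ ∏ l ∈ Finset.Icc 1 L, Real.sinc (x / 2 ^ l)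
  fun_prop

lemma fourier_ofReal_convChain (n : ℕ) (w : ℝ) :
    𝓕 (fun t ↦ (convChain n t : ℂ)) w = KL (n + 1) (2 * π * w) := by
  induction n with
  | zero => simp [convChain, fourier_ofReal_dilBox le_rfl, KL, sinc_eq_real_sinc]
  | succ n ih =>
    rw [convChain_succ_eq_convolution, ofReal_convolution_mul]
    calc _ = 𝓕 (fun t ↦ (convChain n t : ℂ)) w * 𝓕 (fun t ↦ (dilBox (n + 2) t : ℂ)) w :=
          Real.fourier_mul_convolution_eq ((integrable_convChain n).ofReal (𝕜 := ℂ))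
            ((integrable_dilBox _).ofReal (𝕜 := ℂ)) w
      _ = KL (n + 2) (2 * π * w) := by
          rw [ih, fourier_ofReal_dilBox (by omega), KL_succ (n + 1)]
          push_cast
          ring_nf

lemma fourierInv_ofReal_convChain (n : ℕ) (v : ℝ) :
    𝓕⁻ (fun t ↦ (convChain n t : ℂ)) v = KL (n + 1) (2 * π * v) := by
  rw [Real.fourierInv_eq_fourier_neg, fourier_ofReal_convChain, mul_neg, KL_neg]

lemma abs_sinc_le_inv_abs {x : ℝ} (hx : x ≠ 0) : |Real.sinc x| ≤ |x|⁻¹ := by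
  rw [Real.sinc_of_ne_zero hx, abs_div, div_eq_mul_inv]
  exact mul_le_of_le_one_left (inv_nonneg.2 (abs_nonneg x)) (abs_sin_le_one x)

lemma abs_KL_le {L : ℕ} (hL : 2 ≤ L) (x : ℝ) :
    |KL L x| ≤ |Real.sinc (x / 2)| * |Real.sinc (x / 4)| := by
  have hsub : ({1, 2} : Finset ℕ) ⊆ Finset.Icc 1 L := by
    intro i hi
    simp only [Finset.mem_insert, Finset.mem_singleton, Finset.mem_Icc] at hi ⊢
    omega
  rw [KL, Finset.abs_prod, ← Finset.prod_sdiff hsub, Finset.prod_pair (by norm_num),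
    pow_one, show (2 : ℝ) ^ 2 = 4 by norm_num]
  refine mul_le_of_le_one_left (by positivity) ?_
  exact Finset.prod_le_one (fun _ _ ↦ abs_nonneg _) fun _ _ ↦ Real.abs_sinc_le_one _

lemma abs_sinc_half_mul_abs_sinc_quarter_le (x : ℝ) :
    |Real.sinc (x / 2)| * |Real.sinc (x / 4)| ≤ 9 * (1 + x ^ 2)⁻¹ := by
  have hle_one : |Real.sinc (x / 2)| * |Real.sinc (x / 4)| ≤ 1 :=
    mul_le_one₀ (Real.abs_sinc_le_one _) (abs_nonneg _) (Real.abs_sinc_le_one _)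
  have hdecay : |Real.sinc (x / 2)| * |Real.sinc (x / 4)| * x ^ 2 ≤ 8 := by
    rcases eq_or_ne x 0 with rfl | hx
    · norm_num
    calc |Real.sinc (x / 2)| * |Real.sinc (x / 4)| * x ^ 2
        ≤ |x / 2|⁻¹ * |x / 4|⁻¹ * x ^ 2 := by
          gcongr
          · exact abs_sinc_le_inv_abs (by positivity)
          · exact abs_sinc_le_inv_abs (by positivity)
      _ = 8 := by
          rw [abs_div, abs_div, ← sq_abs x]
          field_simp
          norm_num
  rw [← div_eq_mul_inv, le_div_iff₀ (by positivity)]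
  linarith

lemma integrable_KL {L : ℕ} (hL : 2 ≤ L) : Integrable (KL L) := by
  refine (integrable_inv_one_add_sq.const_mul 9).mono' (continuous_KL L).aestronglyMeasurable
    (ae_of_all _ fun x ↦ ?_)
  exact (abs_KL_le hL x).trans (abs_sinc_half_mul_abs_sinc_quarter_le x)

lemma myFT_eq_sqrt_two_pi_mul_fourier {f : ℝ → ℝ} {h : ℝ → ℂ}
    (hf : ∀ x, (f x : ℂ) = h (x / (2 * π))) (ξ : ℝ) :
    myFT f ξ = Real.sqrt (2 * π) * 𝓕 h ξ := by
  have hintegrand : ∀ x, (f x : ℂ) * Complex.exp (-Complex.I * ξ * x) =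
      Complex.exp (↑(-2 * π * (x / (2 * π)) * ξ) * Complex.I) • h (x / (2 * π)) := by
    intro x
    rw [hf, smul_eq_mul, mul_comm]
    congr 2
    push_cast
    field_simp
  have hsqrt : ((Real.sqrt (2 * π) : ℝ) : ℂ) ^ 2 = ((2 * π : ℝ) : ℂ) := by
    rw [← Complex.ofReal_pow, Real.sq_sqrt (by positivity)]
  rw [myFT, funext hintegrand, Measure.integral_comp_div
    (fun y ↦ Complex.exp (↑(-2 * π * y * ξ) * Complex.I) • h y),
    ← Real.fourier_real_eq_integral_exp_smul, abs_of_pos (by positivity), Complex.real_smul,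
    ← hsqrt]
  field_simp

lemma myFT_KL (n : ℕ) (ξ : ℝ) :
    myFT (KL (n + 2)) ξ = Real.sqrt (2 * π) * convChain (n + 1) ξ := by
  set g : ℝ → ℂ := fun t ↦ (convChain (n + 1) t : ℂ)
  have hKL : ∀ x, (KL (n + 2) x : ℂ) = 𝓕⁻ g (x / (2 * π)) := fun x ↦ by
    rw [fourierInv_ofReal_convChain, mul_div_cancel₀ _ (by positivity)]
  have hFg : Integrable (𝓕 g) := by
    rw [show 𝓕 g = fun w ↦ (KL (n + 2) (2 * π * w) : ℂ) from
      funext (fourier_ofReal_convChain (n + 1))]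
    exact ((integrable_KL (L := n + 2) (by omega)).comp_mul_left'
      (by positivity : 2 * π ≠ 0)).ofReal
  rw [myFT_eq_sqrt_two_pi_mul_fourier hKL,
    (integrable_convChain (n + 1)).ofReal.fourier_fourierInv_eq hFg
      (Complex.continuous_ofReal.comp (continuous_convChain_succ n)).continuousAt]

theorem fourier_transform_KL (L : ℕ) (hL : 2 ≤ L) :
    (∀ ξ : ℝ, 1 - (2 : ℝ) ^ (-(L : ℤ)) ≤ |ξ| → myFT (KL L) ξ = 0) ∧
    (∀ ξ : ℝ, |ξ| ≤ (2 : ℝ) ^ (-(L : ℤ)) →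
        myFT (KL L) ξ = (Real.sqrt (2 * Real.pi) : ℂ)) ∧
    (∀ ξ : ℝ, myFT (KL L) ξ = (Real.sqrt (2 * Real.pi) : ℂ) * (convChain (L - 1) ξ : ℂ)) := by
  obtain ⟨n, rfl⟩ : ∃ n, L = n + 2 := ⟨L - 2, by omega⟩
  refine ⟨fun ξ hξ ↦ ?_, fun ξ hξ ↦ ?_, myFT_KL n⟩
  · rw [myFT_KL, convChain_succ_eq_zero_of_le_abs n hξ, Complex.ofReal_zero, mul_zero]
  · rw [myFT_KL, convChain_eq_one_of_abs_le (n + 1) hξ, Complex.ofReal_one, mul_one]
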